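/- arXiv:2502.12495 — 4 statements merged into one kernel-verified Lean document; each statement's English description precedes it below -/
import Mathlib

section
/- The number of points of the projective space ℙ(F,V) (= PG(8,q)) that are fixed by the projectivity induced by σ, i.e. the number of one-dimensional F-subspaces F·v with σ(v) ∈ F·v, is exactly g·(q² + q + 1). -/
open Module

noncomputable section

/-- The ambient 9-dimensional space `V = K³` (an `F`-space when `K` is an `F`-algebra). -/
abbrev VK (K : Type*) := K × K × K

/-- The semilinear map `σ(x,y,z) = (z^q, x^q, y^q)` of `V = K³`. -/
def sig (q : ℕ) {K : Type*} [Field K] (v : VK K) : VK K :=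
  (v.2.2 ^ q, v.1 ^ q, v.2.1 ^ q)

/-- The S-plane through `v`, i.e. the 3-dimensional `F`-subspace `K·v`. -/
def Splane (F : Type*) [Field F] {K : Type*} [Field K] [Algebra F K]
    (v : VK K) : Submodule F (VK K) :=
  Submodule.restrictScalars F (Submodule.span K {v})

/-- `[v]` is a fixed point: `σ(v) ∈ F·v`. -/
def IsFixedPt (F : Type*) [Field F] {K : Type*} [Field K] [Algebra F K]
    (q : ℕ) (v : VK K) : Prop :=
  sig q v ∈ Submodule.span F {v}

/-- `[v]` has collinear orbit: the `F`-span of `{v, σv, σ²v}` is 2-dimensional. -/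
def Collin (F : Type*) [Field F] {K : Type*} [Field K] [Algebra F K]
    (q : ℕ) (v : VK K) : Prop :=
  finrank F (Submodule.span F {v, sig q v, sig q (sig q v)}) = 2

/-- `[v]` has triangle orbit: `v, σv, σ²v` are `F`-linearly independent. -/
def Triangle (F : Type*) [Field F] {K : Type*} [Field K] [Algebra F K]
    (q : ℕ) (v : VK K) : Prop :=
  LinearIndependent F ![v, sig q v, sig q (sig q v)]

/-- The S-plane `K·v` has Type I: `σ(v) ∈ K·v`. -/
def TypeI {K : Type*} [Field K] (q : ℕ) (v : VK K) : Prop :=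
  sig q v ∈ Submodule.span K {v}

/-- The S-plane `K·v` has Type II: `v, σv, σ²v` `K`-dependent but `σ(v) ∉ K·v`. -/
def TypeII {K : Type*} [Field K] (q : ℕ) (v : VK K) : Prop :=
  ¬ LinearIndependent K ![v, sig q v, sig q (sig q v)] ∧
    sig q v ∉ Submodule.span K {v}

/-- The S-plane `K·v` has Type III: `v, σv, σ²v` are `K`-linearly independent. -/
def TypeIII {K : Type*} [Field K] (q : ℕ) (v : VK K) : Prop :=
  LinearIndependent K ![v, sig q v, sig q (sig q v)]

/-- `σ` acts on the subspace `W` as multiplication by a scalar of `F`. -/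
def ScalarOn {F : Type*} [Field F] {K : Type*} [Field K] [Algebra F K]
    (q : ℕ) (W : Submodule F (VK K)) : Prop :=
  ∃ c : F, ∀ v ∈ W, sig q v = c • v

/-- A pointwise-fixed plane: 3-dimensional `F`-subspace on which `σ` acts as a scalar. -/
def PtwisePlane {F : Type*} [Field F] {K : Type*} [Field K] [Algebra F K]
    (q : ℕ) (W : Submodule F (VK K)) : Prop :=
  finrank F W = 3 ∧ ScalarOn q W

/-- A fixed line: 2-dimensional `F`-subspace `L` with `σ(L) = L`. -/
def FixedLine {F : Type*} [Field F] {K : Type*} [Field K] [Algebra F K]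
    (q : ℕ) (L : Submodule F (VK K)) : Prop :=
  finrank F L = 2 ∧ sig q '' (L : Set (VK K)) = (L : Set (VK K))

/-- A pointwise-fixed line: fixed line on which `σ` acts as a scalar. -/
def PtwiseLine {F : Type*} [Field F] {K : Type*} [Field K] [Algebra F K]
    (q : ℕ) (L : Submodule F (VK K)) : Prop :=
  FixedLine q L ∧ ScalarOn q L

/-- A fixed-I-line: fixed line, not scalar, contained in some `K·v`. -/
def FixedILine {F : Type*} [Field F] {K : Type*} [Field K] [Algebra F K]
    (q : ℕ) (L : Submodule F (VK K)) : Prop :=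
  FixedLine q L ∧ ¬ ScalarOn q L ∧ ∃ v : VK K, v ≠ 0 ∧ L ≤ Splane F v

/-- A fixed-II-line: fixed line, not scalar, contained in no `K·v`. -/
def FixedIILine {F : Type*} [Field F] {K : Type*} [Field K] [Algebra F K]
    (q : ℕ) (L : Submodule F (VK K)) : Prop :=
  FixedLine q L ∧ ¬ ScalarOn q L ∧ ¬ ∃ v : VK K, v ≠ 0 ∧ L ≤ Splane F v

/-- A hwise-fixed-5-space: 6-dimensional `F`-subspace `W` with `σ(W) = W` such that the
map induced by `σ` on `V/W` is multiplication by a scalar. -/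
def HFix5 {F : Type*} [Field F] {K : Type*} [Field K] [Algebra F K]
    (q : ℕ) (W : Submodule F (VK K)) : Prop :=
  finrank F W = 6 ∧ sig q '' (W : Set (VK K)) = (W : Set (VK K)) ∧
    ∃ c : F, ∀ v : VK K, sig q v - c • v ∈ W

/-- An `H_I`-5-space: a 2-dimensional `K`-subspace `U` of `V` with `σ(U) = U`. -/
def HI5 {K : Type*} [Field K] (q : ℕ) (U : Submodule K (VK K)) : Prop :=
  finrank K U = 2 ∧ sig q '' (U : Set (VK K)) = (U : Set (VK K))

section Stmt0Aux

variable {F K : Type*} [Field F] [Fintype F] [Field K] [Fintype K] [Algebra F K]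

lemma algebraMap_pow_q {q : ℕ} (hF : Fintype.card F = q) (a : F) :
    (algebraMap F K a) ^ q = algebraMap F K a := by
  rw [← map_pow, ← hF, FiniteField.pow_card]

lemma smul_pow_q {q : ℕ} (hF : Fintype.card F = q) (a : F) (w : K) :
    (a • w) ^ q = a • w ^ q := by
  rw [Algebra.smul_def, mul_pow, algebraMap_pow_q hF, ← Algebra.smul_def]

lemma pow_q3 {q : ℕ} (hK : Fintype.card K = q ^ 3) (x : K) : x ^ q ^ 3 = x := by
  rw [← hK, FiniteField.pow_card]

lemma sig_smul {q : ℕ} (hF : Fintype.card F = q) (a : F) (v : VK K) :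
    sig q (a • v) = a • sig q v := by
  show ((a • v).2.2 ^ q, (a • v).1 ^ q, (a • v).2.1 ^ q)
      = a • (v.2.2 ^ q, v.1 ^ q, v.2.1 ^ q)
  simp only [Prod.smul_fst, Prod.smul_snd, smul_pow_q hF, Prod.smul_mk]

lemma smul_cancel_vk {a b : F} {v : VK K} (hv : v ≠ 0) (h : a • v = b • v) : a = b := by
  by_contra hab
  apply hv
  have h0 : (a - b) • v = 0 := by rw [sub_smul, h, sub_self]
  have := congrArg (fun w => (a - b)⁻¹ • w) h0
  simpa [inv_smul_smul₀ (sub_ne_zero.2 hab)] using this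

lemma smul_ne_zero_vk {a : F} {v : VK K} (ha : a ≠ 0) (hv : v ≠ 0) : a • v ≠ 0 := by
  intro h
  apply hv
  have := congrArg (fun w => a⁻¹ • w) h
  simpa [inv_smul_smul₀ ha] using this

lemma fixed_struct {q : ℕ} (hq : 2 < q) (hF : Fintype.card F = q)
    (hK : Fintype.card K = q ^ 3) {c : F} {v : VK K} (hv : v ≠ 0)
    (h : sig q v = c • v) :
    v.1 ≠ 0 ∧ c ^ 3 = 1 ∧ v.2.1 = (algebraMap F K c) ^ 2 * v.1 ^ q ∧
      v.2.2 = (algebraMap F K c) * v.1 ^ (q ^ 2) := by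
  have hq0 : q ≠ 0 := by omega
  have h1 : v.2.2 ^ q = c • v.1 := congrArg Prod.fst h
  have h2 : v.1 ^ q = c • v.2.1 := congrArg (fun p => p.2.1) h
  have h3 : v.2.1 ^ q = c • v.2.2 := congrArg (fun p => p.2.2) h
  rw [Algebra.smul_def] at h1 h2 h3
  have hc0 : algebraMap F K c ≠ 0 := by
    intro h0
    apply hv
    rw [h0, zero_mul] at h1 h2 h3
    have hx : v.1 = 0 := by
      have := pow_eq_zero_iff hq0 |>.1 h2; exact this
    have hy : v.2.1 = 0 := pow_eq_zero_iff hq0 |>.1 h3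
    have hz : v.2.2 = 0 := pow_eq_zero_iff hq0 |>.1 h1
    show v = ((0 : K), (0 : K), (0 : K))
    exact Prod.ext hx (Prod.ext hy hz)
  have hx : v.1 ≠ 0 := by
    intro h0
    apply hv
    have hy : v.2.1 = 0 := by
      rw [h0, zero_pow hq0] at h2
      exact (mul_eq_zero.1 h2.symm).resolve_left hc0
    have hz : v.2.2 = 0 := by
      rw [hy, zero_pow hq0] at h3
      exact (mul_eq_zero.1 h3.symm).resolve_left hc0
    show v = ((0 : K), (0 : K), (0 : K))
    exact Prod.ext h0 (Prod.ext hy hz)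
  have key : v.1 ^ q ^ 3 = (algebraMap F K c) ^ 3 * v.1 := by
    have e0 : v.1 ^ q ^ 3 = ((v.1 ^ q) ^ q) ^ q := by
      rw [← pow_mul, ← pow_mul]
      congr 1
      ring
    rw [e0, h2, mul_pow, algebraMap_pow_q hF, mul_pow, algebraMap_pow_q hF, h3,
      mul_pow, algebraMap_pow_q hF, h1]
    ring
  have hφ3 : (algebraMap F K c) ^ 3 = 1 := by
    have h' : (algebraMap F K c) ^ 3 * v.1 = 1 * v.1 := by
      rw [← key, pow_q3 hK, one_mul]
    exact mul_right_cancel₀ hx h'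
  have hc3 : c ^ 3 = 1 := by
    apply (algebraMap F K).injective
    rw [map_pow, map_one, hφ3]
  have h1c : algebraMap F K c * (algebraMap F K c) ^ 2 = 1 := by
    rw [← hφ3]; ring
  have hy : v.2.1 = (algebraMap F K c) ^ 2 * v.1 ^ q := by
    apply mul_left_cancel₀ hc0
    rw [← mul_assoc, h1c, one_mul, h2]
  have hz : v.2.2 = (algebraMap F K c) * v.1 ^ (q ^ 2) := by
    apply mul_left_cancel₀ hc0
    rw [← h3, hy, mul_pow, ← map_pow, algebraMap_pow_q hF, map_pow, ← pow_mul, ← pow_two]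
    ring
  exact ⟨hx, hc3, hy, hz⟩

lemma sig_of_data {q : ℕ} (hq : 2 < q) (hF : Fintype.card F = q)
    (hK : Fintype.card K = q ^ 3) {c : F} (hc : c ^ 3 = 1) (x : K) :
    sig q (x, (algebraMap F K c) ^ 2 * x ^ q, algebraMap F K c * x ^ (q ^ 2))
      = c • (x, (algebraMap F K c) ^ 2 * x ^ q, algebraMap F K c * x ^ (q ^ 2)) := by
  have hφ3 : (algebraMap F K c) ^ 3 = 1 := by rw [← map_pow, hc, map_one]
  have h1c : algebraMap F K c * (algebraMap F K c) ^ 2 = 1 := by rw [← hφ3]; ring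
  refine Prod.ext ?_ (Prod.ext ?_ ?_)
  · show (algebraMap F K c * x ^ (q ^ 2)) ^ q = c • x
    rw [mul_pow, algebraMap_pow_q hF, Algebra.smul_def, ← pow_mul,
      show q ^ 2 * q = q ^ 3 from (pow_succ q 2).symm, pow_q3 hK]
  · show x ^ q = c • ((algebraMap F K c) ^ 2 * x ^ q)
    rw [Algebra.smul_def, ← mul_assoc, h1c, one_mul]
  · show ((algebraMap F K c) ^ 2 * x ^ q) ^ q = c • (algebraMap F K c * x ^ (q ^ 2))
    rw [mul_pow, ← map_pow, algebraMap_pow_q hF, map_pow, ← pow_mul, ← pow_two,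
      Algebra.smul_def]
    ring

lemma pt_eq_span (P : Submodule F (VK K)) (h1 : Module.finrank F P = 1)
    {v : VK K} (hv : v ∈ P) (h0 : v ≠ 0) : P = Submodule.span F {v} := by
  haveI : Module.Finite F (VK K) := Module.finite_iff_finite.mpr inferInstance
  exact (Submodule.eq_of_le_of_finrank_eq
    ((Submodule.span_singleton_le_iff_mem v P).2 hv)
    (by rw [finrank_span_singleton h0, h1])).symm

lemma span_mem_S {q : ℕ} (hF : Fintype.card F = q) {v : VK K} (hv : v ≠ 0)
    (hs : sig q v ∈ Submodule.span F {v}) :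
    Module.finrank F (Submodule.span F {v}) = 1 ∧
      ∀ w ∈ Submodule.span F {v}, sig q w ∈ Submodule.span F {v} := by
  refine ⟨finrank_span_singleton hv, fun w hw => ?_⟩
  obtain ⟨a, rfl⟩ := Submodule.mem_span_singleton.1 hw
  rw [sig_smul hF]
  exact Submodule.smul_mem _ a hs

lemma card_cube_roots {q : ℕ} (hq : 2 < q) (hF : Fintype.card F = q) :
    Nat.card {c : F // c ^ 3 = 1} = Nat.gcd 3 (q - 1) := by
  classical
  set d := Nat.gcd 3 (q - 1) with hd
  have hd3 : d ∣ 3 := Nat.gcd_dvd_left _ _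
  have hdq : d ∣ q - 1 := Nat.gcd_dvd_right _ _
  have hd0 : 0 < d := Nat.gcd_pos_of_pos_left _ (by norm_num)
  have hq1 : q - 1 ≠ 0 := by omega
  have hiff : ∀ c : F, c ^ 3 = 1 ↔ c ^ d = 1 := by
    intro c
    constructor
    · intro h
      have hc0 : c ≠ 0 := by
        intro h0
        rw [h0, zero_pow (by norm_num : (3 : ℕ) ≠ 0)] at h
        exact zero_ne_one h
      have hdvd1 : orderOf c ∣ 3 := orderOf_dvd_of_pow_eq_one h
      have hdvd2 : orderOf c ∣ q - 1 := orderOf_dvd_of_pow_eq_one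
        (by rw [← hF]; exact FiniteField.pow_card_sub_one_eq_one c hc0)
      exact orderOf_dvd_iff_pow_eq_one.1 (Nat.dvd_gcd hdvd1 hdvd2)
    · intro h
      obtain ⟨k, hk⟩ := hd3
      rw [hk, pow_mul, h, one_pow]
  -- find a primitive d-th root of unity in F
  obtain ⟨g, hg⟩ := IsCyclic.exists_ofOrder_eq_natCard (α := Fˣ)
  have hcard : Nat.card Fˣ = q - 1 := by
    rw [Nat.card_eq_fintype_card, Fintype.card_units, hF]
  have hog : orderOf g = q - 1 := hg.trans hcard
  have hoζ : orderOf (g ^ ((q - 1) / d)) = d := by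
    rw [orderOf_pow, hog, Nat.gcd_eq_right (Nat.div_dvd_of_dvd hdq),
      Nat.div_div_self hdq hq1]
  have hprim : IsPrimitiveRoot ((g ^ ((q - 1) / d) : Fˣ) : F) d := by
    have h' := IsPrimitiveRoot.orderOf (g ^ ((q - 1) / d))
    rw [hoζ] at h'
    exact IsPrimitiveRoot.coe_units_iff.2 h' 
  have hcount : Nat.card {c : F // c ^ d = 1} = d := by
    rw [Nat.card_eq_fintype_card, Fintype.card_subtype]
    have hfin : Finset.filter (fun c : F => c ^ d = 1) Finset.univ
        = (Polynomial.nthRoots d (1 : F)).toFinset := by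
      ext c
      simp [Polynomial.mem_nthRoots hd0]
    rw [hfin, Multiset.toFinset_card_of_nodup (hprim.nthRoots_nodup one_ne_zero),
      hprim.card_nthRoots_one]
  rw [← hcount]
  exact Nat.card_congr (Equiv.subtypeEquivRight hiff)

lemma cardT_right {q : ℕ} (hq : 2 < q) (hF : Fintype.card F = q)
    (hK : Fintype.card K = q ^ 3) :
    Nat.card {v : VK K // v ≠ 0 ∧ sig q v ∈ Submodule.span F {v}}
      = Nat.gcd 3 (q - 1) * (q ^ 3 - 1) := by
  classical
  -- T ≃ T'
  let T' := {p : F × VK K // p.2 ≠ 0 ∧ sig q p.2 = p.1 • p.2}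
  have e1 : T' ≃ {v : VK K // v ≠ 0 ∧ sig q v ∈ Submodule.span F {v}} := by
    refine Equiv.ofBijective
      (fun p => ⟨p.1.2, p.2.1, Submodule.mem_span_singleton.2 ⟨p.1.1, p.2.2.symm⟩⟩) ⟨?_, ?_⟩
    · rintro ⟨⟨c, v⟩, hv, hcv⟩ ⟨⟨c', v'⟩, hv', hcv'⟩ h
      have hvv : v = v' := congrArg Subtype.val h
      subst hvv
      have : c = c' := smul_cancel_vk hv (hcv.symm.trans hcv')
      subst this
      rfl
    · rintro ⟨v, hv0, hs⟩
      obtain ⟨a, ha⟩ := Submodule.mem_span_singleton.1 hs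
      exact ⟨⟨(a, v), hv0, ha.symm⟩, rfl⟩
  -- T' ≃ C × K0
  have e2 : {c : F // c ^ 3 = 1} × {x : K // x ≠ 0} ≃ T' := by
    refine Equiv.ofBijective (fun cx =>
      ⟨(cx.1.1, (cx.2.1, (algebraMap F K cx.1.1) ^ 2 * cx.2.1 ^ q,
          algebraMap F K cx.1.1 * cx.2.1 ^ (q ^ 2))),
        fun h0 => cx.2.2 (congrArg Prod.fst h0),
        sig_of_data hq hF hK cx.1.2 cx.2.1⟩) ⟨?_, ?_⟩
    · rintro ⟨⟨c, hc⟩, ⟨x, hx⟩⟩ ⟨⟨c', hc'⟩, ⟨x', hx'⟩⟩ h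
      have h' := congrArg Subtype.val h
      have hcc : c = c' := congrArg Prod.fst h'
      have hxx : x = x' := congrArg (fun p => p.2.1) h'
      subst hcc; subst hxx
      rfl
    · rintro ⟨⟨c, v⟩, hv, hcv⟩
      obtain ⟨hx, hc3, hy, hz⟩ := fixed_struct hq hF hK hv hcv
      refine ⟨(⟨c, hc3⟩, ⟨v.1, hx⟩), ?_⟩
      apply Subtype.ext
      exact Prod.ext rfl (Prod.ext rfl (Prod.ext hy.symm hz.symm))
  have cC : Nat.card {c : F // c ^ 3 = 1} = Nat.gcd 3 (q - 1) :=
    card_cube_roots hq hF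
  have cK0 : Nat.card {x : K // x ≠ 0} = q ^ 3 - 1 := by
    rw [← Nat.card_congr (unitsEquivNeZero (G₀ := K)), Nat.card_eq_fintype_card,
      Fintype.card_units, hK]
  calc Nat.card {v : VK K // v ≠ 0 ∧ sig q v ∈ Submodule.span F {v}}
      = Nat.card ({c : F // c ^ 3 = 1} × {x : K // x ≠ 0}) :=
        (Nat.card_congr (e2.trans e1)).symm
    _ = Nat.gcd 3 (q - 1) * (q ^ 3 - 1) := by rw [Nat.card_prod, cC, cK0]

lemma cardT_left {q : ℕ} (hq : 2 < q) (hF : Fintype.card F = q)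
    (hK : Fintype.card K = q ^ 3) :
    Nat.card {v : VK K // v ≠ 0 ∧ sig q v ∈ Submodule.span F {v}}
      = Nat.card {P : Submodule F (VK K) //
          Module.finrank F P = 1 ∧ ∀ v ∈ P, sig q v ∈ P} * (q - 1) := by
  classical
  let S := {P : Submodule F (VK K) // Module.finrank F P = 1 ∧ ∀ v ∈ P, sig q v ∈ P}
  have exgen : ∀ P : S, ∃ w : VK K, w ∈ P.1 ∧ w ≠ 0 := by
    intro P
    apply Submodule.exists_mem_ne_zero_of_ne_bot
    intro hbot
    have h1 := P.2.1
    rw [hbot, finrank_bot] at h1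
    exact absurd h1 (by norm_num)
  let gen : S → VK K := fun P => (exgen P).choose
  have hgen : ∀ P : S, gen P ∈ P.1 ∧ gen P ≠ 0 := fun P => (exgen P).choose_spec
  have e3 : S × {a : F // a ≠ 0} ≃
      {v : VK K // v ≠ 0 ∧ sig q v ∈ Submodule.span F {v}} := by
    have memP : ∀ (P : S) (a : {a : F // a ≠ 0}), a.1 • gen P ∈ P.1 :=
      fun P a => Submodule.smul_mem _ _ (hgen P).1
    have ne0 : ∀ (P : S) (a : {a : F // a ≠ 0}), a.1 • gen P ≠ 0 :=
      fun P a => smul_ne_zero_vk a.2 (hgen P).2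
    have spanP : ∀ (P : S) (a : {a : F // a ≠ 0}),
        P.1 = Submodule.span F {a.1 • gen P} :=
      fun P a => pt_eq_span P.1 P.2.1 (memP P a) (ne0 P a)
    refine Equiv.ofBijective (fun Pa => ⟨Pa.2.1 • gen Pa.1, ne0 Pa.1 Pa.2, ?_⟩)
      ⟨?_, ?_⟩
    · rw [← spanP Pa.1 Pa.2]
      exact Pa.1.2.2 _ (memP Pa.1 Pa.2)
    · rintro ⟨P, a⟩ ⟨P', a'⟩ h
      have hw : a.1 • gen P = a'.1 • gen P' := congrArg Subtype.val h
      have hPP : P = P' := by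
        apply Subtype.ext
        rw [spanP P a, hw, ← spanP P' a']
      subst hPP
      have haa : a.1 = a'.1 := smul_cancel_vk (hgen P).2 hw
      rw [Prod.mk.injEq]
      exact ⟨rfl, Subtype.ext haa⟩
    · rintro ⟨v, hv0, hs⟩
      have hSm := span_mem_S hF hv0 hs
      let P : S := ⟨Submodule.span F {v}, hSm⟩
      have hvP : v ∈ P.1 := Submodule.mem_span_singleton_self v
      have hgP : gen P ∈ Submodule.span F {v} := (hgen P).1
      obtain ⟨b, hb⟩ := Submodule.mem_span_singleton.1 hgP
      have hb0 : b ≠ 0 := by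
        intro h0
        apply (hgen P).2
        rw [← hb, h0, zero_smul]
      refine ⟨(P, ⟨b⁻¹, inv_ne_zero hb0⟩), Subtype.ext ?_⟩
      show b⁻¹ • gen P = v
      rw [← hb, inv_smul_smul₀ hb0]
  rw [← Nat.card_congr e3, Nat.card_prod]
  congr 1
  rw [← Nat.card_congr (unitsEquivNeZero (G₀ := F)), Nat.card_eq_fintype_card,
    Fintype.card_units, hF]

end Stmt0Aux

/-- the number of σ-fixed points of PG(8,q) is g(q²+q+1). -/
theorem stmt0 (q : ℕ) (hq : 2 < q)
    (F : Type*) [Field F] [Fintype F] (K : Type*) [Field K] [Fintype K]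
    [Algebra F K] (hF : Fintype.card F = q) (hK : Fintype.card K = q ^ 3) :
    Nat.card {P : Submodule F (VK K) //
        finrank F P = 1 ∧ ∀ v ∈ P, sig q v ∈ P} =
      Nat.gcd 3 (q - 1) * (q ^ 2 + q + 1) := by
  classical
  have h1 := cardT_left (F := F) (K := K) hq hF hK
  have h2 := cardT_right (F := F) (K := K) hq hF hK
  have hfac : (q ^ 2 + q + 1) * (q - 1) = q ^ 3 - 1 := by
    obtain ⟨m, rfl⟩ := Nat.exists_eq_add_of_le (show 1 ≤ q by omega)
    rw [Nat.add_sub_cancel_left]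
    exact Nat.eq_sub_of_add_eq (by ring)
  have hpos : 0 < q - 1 := by omega
  apply Nat.eq_of_mul_eq_mul_right hpos
  rw [← h1, h2, ← hfac]
  ring
end
end

section
/- The number of hwise-fixed-5-spaces is exactly g; that is, there are exactly g six-dimensional F-subspaces W of V with σ(W) = W such that the F-linear map induced by σ on the quotient V/W is multiplication by a scalar. -/
open Module

noncomputable section

/-! `σ` is an `F`-linear map with `σ³ = 1`. If `σ` induces the scalar `c` on `V/W`, then
`W ⊇ (σ - c)V`. When `c³ ≠ 1` the map `σ - c` is invertible, since it divides `σ³ - c³ = 1 - c³`,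
so `W = V`; hence `c³ = 1`. Then `ker (σ - c) = {(x, c²x^q, c x^{q²})} ≅ K` is 3-dimensional, so
`(σ - c)V` is 6-dimensional and equals `W`; it is `σ`-stable because `σ` commutes with `σ - c`.
Two distinct scalars `c ≠ c'` cannot both be induced on `V/W` unless `W = V`, so the spaces are
in bijection with the cube roots of unity in `F`, and there are `gcd(3, q - 1)` of those because
`Fˣ` is cyclic of order `q - 1`. -/

section

variable {F V : Type*} [Field F] [AddCommGroup V] [Module F V]

theorem LinearMap.range_sub_algebraMap_eq_top_of_pow_eq_one {T : Module.End F V} {n : ℕ}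
    (hT : T ^ n = 1) {c : F} (hc : c ^ n ≠ 1) :
    LinearMap.range (T - algebraMap F (Module.End F V) c) = ⊤ := by
  set s := ∑ i ∈ Finset.range n, T ^ i * algebraMap F (Module.End F V) c ^ (n - 1 - i)
  have hmul : (T - algebraMap F _ c) * s = algebraMap F _ (1 - c ^ n) := by
    rw [(Algebra.commute_algebraMap_right c T).mul_geom_sum₂, hT, map_sub, map_one, map_pow]
  have hunit : (1 - c ^ n) ≠ 0 := sub_ne_zero.mpr hc.symm
  refine LinearMap.range_eq_top.mpr fun v => ⟨s ((1 - c ^ n)⁻¹ • v), ?_⟩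
  rw [← Module.End.mul_apply, hmul, Module.algebraMap_end_apply, smul_smul,
    mul_inv_cancel₀ hunit, one_smul]

theorem Submodule.eq_top_of_forall_sub_smul_mem (T : V → V) {W : Submodule F V} {c c' : F}
    (hne : c ≠ c') (h : ∀ v, T v - c • v ∈ W) (h' : ∀ v, T v - c' • v ∈ W) : W = ⊤ := by
  refine eq_top_iff.mpr fun v _ => ?_
  have hv : (c' - c) • v ∈ W := by
    simpa [sub_smul] using W.sub_mem (h v) (h' v)
  simpa [smul_smul, inv_mul_cancel₀ (sub_ne_zero.mpr hne.symm)] using W.smul_mem (c' - c)⁻¹ hv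

theorem LinearMap.image_range_of_commute {T S : Module.End F V}
    (hT : Function.Surjective T) (h : Commute T S) :
    T '' (LinearMap.range S : Set V) = LinearMap.range S := by
  simp only [LinearMap.coe_range]
  rw [← Set.range_comp, ← Module.End.coe_mul, h.eq, Module.End.coe_mul, hT.range_comp]

end

theorem FiniteField.natCard_pow_eq_one (F : Type*) [Field F] [Fintype F] (n : ℕ) [NeZero n] :
    Nat.card {c : F // c ^ n = 1} = n.gcd (Fintype.card F - 1) := by
  have e : rootsOfUnity n F ≃ {c : F // c ^ n = 1} :=
    (rootsOfUnityEquivNthRoots F n).trans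
      (Equiv.subtypeEquivRight fun _ => Polynomial.mem_nthRoots (NeZero.pos n))
  rw [← Nat.card_congr e, rootsOfUnity_eq_ker, IsCyclic.card_powMonoidHom_ker, Nat.card_units,
    Nat.card_eq_fintype_card, Nat.gcd_comm]

theorem Module.finrank_eq_of_card_eq_pow (F K : Type*) [Field F] [Fintype F] [AddCommGroup K]
    [Module F K] [Fintype K] {n : ℕ} (hK : Fintype.card K = Fintype.card F ^ n) :
    finrank F K = n :=
  Nat.pow_right_injective Fintype.one_lt_card (Module.card_eq_pow_finrank.symm.trans hK)

theorem pow_pow_pow_of_card_eq_pow_three {K : Type*} [Field K] [Fintype K] {q : ℕ}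
    (hK : Fintype.card K = q ^ 3) (x : K) : ((x ^ q) ^ q) ^ q = x :=
  calc ((x ^ q) ^ q) ^ q = x ^ Fintype.card K := by rw [hK]; ring
    _ = x := FiniteField.pow_card x

theorem sig_sig_sig {K : Type*} [Field K] [Fintype K] {q : ℕ} (hK : Fintype.card K = q ^ 3)
    (v : VK K) : sig q (sig q (sig q v)) = v :=
  Prod.ext (pow_pow_pow_of_card_eq_pow_three hK _)
    (Prod.ext (pow_pow_pow_of_card_eq_pow_three hK _) (pow_pow_pow_of_card_eq_pow_three hK _))

section Sigma

variable (F K : Type*) [Field F] [Fintype F] [Field K] [Algebra F K]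

def sigmaLin : Module.End F (VK K) :=
  let φ := (FiniteField.frobeniusAlgHom F K).toLinearMap
  (φ ∘ₗ LinearMap.snd F K K ∘ₗ LinearMap.snd F K (K × K)).prod
    ((φ ∘ₗ LinearMap.fst F K (K × K)).prod
      (φ ∘ₗ LinearMap.fst F K K ∘ₗ LinearMap.snd F K (K × K)))

variable {F K}

@[simp]
theorem coe_sigmaLin : ⇑(sigmaLin F K) = sig (Fintype.card F) := rfl

variable [Fintype K]

theorem sigmaLin_pow_three (hK : Fintype.card K = Fintype.card F ^ 3) :
    sigmaLin F K ^ 3 = 1 :=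
  LinearMap.ext fun v => by simp [pow_succ, sig_sig_sig hK]

theorem finrank_VK_eq_nine (hK : Fintype.card K = Fintype.card F ^ 3) :
    finrank F (VK K) = 9 := by
  simp [Module.finrank_prod, Module.finrank_eq_of_card_eq_pow F K hK]

theorem finrank_ker_sigmaLin_sub (hK : Fintype.card K = Fintype.card F ^ 3)
    {c : F} (hc : c ^ 3 = 1) :
    finrank F (LinearMap.ker (sigmaLin F K - algebraMap F _ c)) = 3 := by
  let φ := (FiniteField.frobeniusAlgHom F K).toLinearMap
  have hφ : ∀ (a : F) (x : K), (a • x) ^ Fintype.card F = a • x ^ Fintype.card F :=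
    map_smul (FiniteField.frobeniusAlgHom F K)
  have hφ3 := pow_pow_pow_of_card_eq_pow_three hK
  let e : K →ₗ[F] VK K := LinearMap.id.prod ((c ^ 2 • φ).prod (c • φ ∘ₗ φ))
  have he : Function.Injective e := fun x y h => congrArg Prod.fst h
  suffices LinearMap.range e = LinearMap.ker (sigmaLin F K - algebraMap F _ c) by
    rw [← this, LinearMap.finrank_range_of_inj he, Module.finrank_eq_of_card_eq_pow F K hK]
  have hc' : c * (c * c) = 1 := by rw [← hc]; ring
  ext v
  simp only [LinearMap.mem_range, LinearMap.mem_ker, LinearMap.sub_apply,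
    Module.algebraMap_end_apply, coe_sigmaLin, sub_eq_zero]
  constructor
  · rintro ⟨x, rfl⟩
    simp [e, φ, sig, hφ, hφ3, smul_smul, sq, hc']
  · intro hv
    simp only [sig, Prod.ext_iff, Prod.smul_fst, Prod.smul_snd] at hv
    obtain ⟨-, h1, h2⟩ := hv
    refine ⟨v.1, Prod.ext rfl (Prod.ext ?_ ?_)⟩
    · simp [e, φ, h1, smul_smul, sq, mul_assoc, hc']
    · simp [e, φ, h1, h2, smul_smul, hc']

theorem finrank_range_sigmaLin_sub (hK : Fintype.card K = Fintype.card F ^ 3)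
    {c : F} (hc : c ^ 3 = 1) :
    finrank F (LinearMap.range (sigmaLin F K - algebraMap F _ c)) = 6 := by
  have := LinearMap.finrank_range_add_finrank_ker (sigmaLin F K - algebraMap F _ c)
  rw [finrank_ker_sigmaLin_sub hK hc, finrank_VK_eq_nine hK] at this
  omega

theorem hFix5_range_sigmaLin_sub (hK : Fintype.card K = Fintype.card F ^ 3)
    {c : F} (hc : c ^ 3 = 1) :
    HFix5 (Fintype.card F) (LinearMap.range (sigmaLin F K - algebraMap F _ c)) := by
  refine ⟨finrank_range_sigmaLin_sub hK hc, ?_, c, fun v => ⟨v, by simp⟩⟩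
  rw [← coe_sigmaLin]
  exact LinearMap.image_range_of_commute (fun v => ⟨sig _ (sig _ v), sig_sig_sig hK v⟩)
    ((Commute.refl _).sub_right (Algebra.commute_algebraMap_right c _))

theorem exists_eq_range_sigmaLin_sub (hK : Fintype.card K = Fintype.card F ^ 3)
    {W : Submodule F (VK K)} (hW : HFix5 (Fintype.card F) W) :
    ∃ c : F, c ^ 3 = 1 ∧ W = LinearMap.range (sigmaLin F K - algebraMap F _ c) := by
  obtain ⟨h6, -, c, hc⟩ := hW
  have hle : LinearMap.range (sigmaLin F K - algebraMap F _ c) ≤ W := by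
    rintro _ ⟨v, rfl⟩
    simpa using hc v
  have hc3 : c ^ 3 = 1 := by
    by_contra h
    rw [LinearMap.range_sub_algebraMap_eq_top_of_pow_eq_one (sigmaLin_pow_three hK) h,
      top_le_iff] at hle
    rw [hle, finrank_top, finrank_VK_eq_nine hK] at h6
    omega
  refine ⟨c, hc3, (Submodule.eq_of_le_of_finrank_eq hle ?_).symm⟩
  rw [finrank_range_sigmaLin_sub hK hc3, h6]

theorem range_sigmaLin_sub_injective (hK : Fintype.card K = Fintype.card F ^ 3)
    {c c' : F} (hc : c ^ 3 = 1)
    (h : LinearMap.range (sigmaLin F K - algebraMap F _ c) =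
      LinearMap.range (sigmaLin F K - algebraMap F _ c')) : c = c' := by
  by_contra hne
  have htop := Submodule.eq_top_of_forall_sub_smul_mem (sig (Fintype.card F)) hne
    (W := LinearMap.range (sigmaLin F K - algebraMap F _ c)) (fun v => ⟨v, by simp⟩)
    (fun v => by rw [h]; exact ⟨v, by simp⟩)
  have h6 := finrank_range_sigmaLin_sub hK hc
  rw [htop, finrank_top, finrank_VK_eq_nine hK] at h6
  omega

def cubeRootsEquivHFix5 (hK : Fintype.card K = Fintype.card F ^ 3) :
    {c : F // c ^ 3 = 1} ≃ {W : Submodule F (VK K) // HFix5 (Fintype.card F) W} :=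
  Equiv.ofBijective (fun c => ⟨_, hFix5_range_sigmaLin_sub hK c.2⟩)
    ⟨fun c c' h => Subtype.ext (range_sigmaLin_sub_injective hK c.2 (congrArg Subtype.val h)),
      fun W => by
        obtain ⟨c, hc, hW⟩ := exists_eq_range_sigmaLin_sub hK W.2
        exact ⟨⟨c, hc⟩, Subtype.ext hW.symm⟩⟩

end Sigma

theorem stmt2_general (q : ℕ)
    (F : Type*) [Field F] [Fintype F] (K : Type*) [Field K] [Fintype K]
    [Algebra F K] (hF : Fintype.card F = q) (hK : Fintype.card K = q ^ 3) :
    Nat.card {W : Submodule F (VK K) // HFix5 q W} = Nat.gcd 3 (q - 1) := by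
  subst hF
  rw [← Nat.card_congr (cubeRootsEquivHFix5 hK), FiniteField.natCard_pow_eq_one]

/-- the number of hwise-fixed-5-spaces is exactly g. -/
theorem stmt2 (q : ℕ) (hq : 2 < q)
    (F : Type*) [Field F] [Fintype F] (K : Type*) [Field K] [Fintype K]
    [Algebra F K] (hF : Fintype.card F = q) (hK : Fintype.card K = q ^ 3) :
    Nat.card {W : Submodule F (VK K) // HFix5 q W} = Nat.gcd 3 (q - 1) :=
  stmt2_general q F K hF hK
end
end

section
/- Suppose q ≡ −1 (mod 3), and let W be the unique hwise-fixed-5-space. Then there is no 3-dimensional F-subspace T ⊆ W with σ(T) = T on which σ does not act as a scalar; in fact, since W contains no σ-fixed projective points in this case, W contains no σ-invariant 3-dimensional F-subspace at all. -/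
open Module

noncomputable section

theorem cube_one_aux (q : ℕ) (hq : 2 < q) (F : Type*) [Field F] [Fintype F]
    (hF : Fintype.card F = q) (hq3 : q % 3 = 2) (a : F) (ha : a ^ 3 = 1) : a = 1 := by
  have ha0 : a ≠ 0 := by rintro rfl; simp at ha
  have h1 : orderOf a ∣ 3 := orderOf_dvd_of_pow_eq_one ha
  have h2 : a ^ (q - 1) = 1 := by
    rw [← hF]; exact FiniteField.pow_card_sub_one_eq_one a ha0
  have h3 : orderOf a ∣ q - 1 := orderOf_dvd_of_pow_eq_one h2
  have hmod : (q - 1) % 3 = 1 := by omega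
  have hg : Nat.gcd 3 (q - 1) = 1 := by rw [Nat.gcd_rec, hmod]; simp
  have : orderOf a ∣ 1 := hg ▸ Nat.dvd_gcd h1 h3
  exact orderOf_eq_one_iff.mp (Nat.dvd_one.mp this)

theorem no_root_aux (q : ℕ) (hq : 2 < q) (F : Type*) [Field F] [Fintype F]
    (hF : Fintype.card F = q) (hq3 : q % 3 = 2) (a : F) : a * a + a + 1 ≠ 0 := by
  intro h
  have ha3 : a ^ 3 = 1 := by
    have h3 : a ^ 3 - 1 = (a - 1) * (a * a + a + 1) := by ring
    rw [h, mul_zero, sub_eq_zero] at h3; exact h3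
  have ha1 : a = 1 := cube_one_aux q hq F hF hq3 a ha3
  rw [ha1] at h
  have h3F : (3 : F) = 0 := by norm_num at h ⊢; linear_combination h
  obtain ⟨n, hp, hcard⟩ := FiniteField.card F (ringChar F)
  have hdvd : ringChar F ∣ 3 :=
    (CharP.cast_eq_zero_iff F (ringChar F) 3).mp (by exact_mod_cast h3F)
  have hp3 : ringChar F = 3 := by
    rcases (Nat.prime_three.eq_one_or_self_of_dvd _ hdvd) with h1 | h1
    · exact absurd h1 hp.ne_one
    · exact h1
  have : 3 ∣ q := by rw [← hF, hcard, hp3]; exact dvd_pow_self 3 n.pos.ne'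
  omega

def sigL (q : ℕ) (F : Type*) [Field F] {K : Type*} [Field K] [Algebra F K]
    (hadd : ∀ a b : K, (a + b) ^ q = a ^ q + b ^ q)
    (hsmul : ∀ (c : F) (x : K), (c • x) ^ q = c • x ^ q) : VK K →ₗ[F] VK K where
  toFun := sig q
  map_add' v w := by simp only [sig, Prod.fst_add, Prod.snd_add, hadd]; rfl
  map_smul' c v := by simp only [sig, Prod.smul_fst, Prod.smul_snd, hsmul]; rfl

def phiL (q : ℕ) (F : Type*) [Field F] {K : Type*} [Field K] [Algebra F K]
    (hadd : ∀ a b : K, (a + b) ^ q = a ^ q + b ^ q)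
    (hsmul : ∀ (c : F) (x : K), (c • x) ^ q = c • x ^ q) : K →ₗ[F] VK K where
  toFun x := (x, x ^ q, (x ^ q) ^ q)
  map_add' a b := by simp only [hadd]; rfl
  map_smul' c a := by simp only [hsmul]; rfl


/-- for q ≡ −1 (mod 3), the hwise-fixed-5-space contains no h-plane; in
fact it contains no σ-fixed projective point and no σ-invariant 3-dimensional
F-subspace at all. -/
theorem stmt18 (q : ℕ) (hq : 2 < q)
    (F : Type*) [Field F] [Fintype F] (K : Type*) [Field K] [Fintype K]
    [Algebra F K] (hF : Fintype.card F = q) (hK : Fintype.card K = q ^ 3)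
    (hq3 : q % 3 = 2)
    (W : Submodule F (VK K)) (hW : HFix5 q W) :
    (¬ ∃ T : Submodule F (VK K), T ≤ W ∧ finrank F T = 3 ∧
        sig q '' (T : Set (VK K)) = (T : Set (VK K)) ∧ ¬ ScalarOn q T) ∧
    (∀ v ∈ W, v ≠ 0 → ¬ IsFixedPt F q v) ∧
    (¬ ∃ T : Submodule F (VK K), T ≤ W ∧ finrank F T = 3 ∧
        sig q '' (T : Set (VK K)) = (T : Set (VK K))) := by
  classical
  obtain ⟨hW6, hWimg, c, hc⟩ := hW
  obtain ⟨n, hp, hcard⟩ := FiniteField.card F (ringChar F)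
  haveI : Fact (Nat.Prime (ringChar F)) := ⟨hp⟩
  haveI hKp : CharP K (ringChar F) :=
    charP_of_injective_algebraMap (algebraMap F K).injective (ringChar F)
  have hq_eq : q = ringChar F ^ (n : ℕ) := by rw [← hF, hcard]
  have hadd : ∀ a b : K, (a + b) ^ q = a ^ q + b ^ q := by
    intro a b; rw [hq_eq]; exact add_pow_char_pow a b (ringChar F) (n : ℕ)
  have hsmul : ∀ (c : F) (x : K), (c • x) ^ q = c • x ^ q := by
    intro c x
    rw [Algebra.smul_def, Algebra.smul_def, mul_pow, ← map_pow]
    rw [show c ^ q = c by rw [← hF]; exact FiniteField.pow_card c]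
  have hpow3 : ∀ x : K, ((x ^ q) ^ q) ^ q = x := by
    intro x
    rw [← pow_mul, ← pow_mul, show q * (q * q) = q ^ 3 by ring, ← hK]
    exact FiniteField.pow_card x
  set σ := sigL q F hadd hsmul with hσdef
  have hσapp : ∀ v : VK K, σ v = sig q v := fun _ => rfl
  have hσ3 : ∀ v : VK K, σ (σ (σ v)) = v := by
    rintro ⟨x, y, z⟩
    show sig q (sig q (sig q (x, y, z))) = (x, y, z)
    simp only [sig]
    exact Prod.ext (hpow3 x) (Prod.ext (hpow3 y) (hpow3 z))
  have hKF : finrank F K = 3 := by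
    have hcardK := card_eq_pow_finrank (K := F) (V := K)
    rw [hF, hK] at hcardK
    exact (Nat.pow_right_injective (by omega) hcardK.symm)
  haveI : Module.Finite F K := Module.Finite.of_finite
  have hV9 : finrank F (VK K) = 9 := by
    show finrank F (K × K × K) = 9
    rw [Module.finrank_prod, Module.finrank_prod, hKF]
  -- σ maps W into W
  have himg : ∀ x ∈ W, σ x ∈ W := by
    intro x hx
    have h1 : sig q x ∈ sig q '' (W : Set (VK K)) := Set.mem_image_of_mem _ hx
    rw [hWimg] at h1; exact h1
  have hc' : ∀ v : VK K, σ v - c • v ∈ W := hc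
  -- c = 1
  have hc2 : ∀ v : VK K, σ (σ v) - (c * c) • v ∈ W := by
    intro v
    have h1 := himg _ (hc' v)
    rw [map_sub, map_smul] at h1
    have h2 := W.add_mem h1 (W.smul_mem c (hc' v))
    have h3 : σ (σ v) - c • σ v + c • (σ v - c • v) = σ (σ v) - (c * c) • v := by
      module
    rwa [h3] at h2
  have hc3 : ∀ v : VK K, v - (c * c * c) • v ∈ W := by
    intro v
    have h1 := himg _ (hc2 v)
    rw [map_sub, map_smul, hσ3 v] at h1
    have h2 := W.add_mem h1 (W.smul_mem (c * c) (hc' v))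
    have h4 : v - (c * c) • σ v + (c * c) • (σ v - c • v) = v - (c * c * c) • v := by
      module
    rwa [h4] at h2
  have hc1 : c = 1 := by
    apply cube_one_aux q hq F hF hq3
    by_contra hne
    have hall : ∀ v : VK K, v ∈ W := by
      intro v
      have h := hc3 v
      have h1 : (1 - c ^ 3) • v ∈ W := by
        rwa [sub_smul, one_smul, show c ^ 3 = c * c * c by ring]
      have h2 := W.smul_mem (1 - c ^ 3)⁻¹ h1
      rwa [smul_smul, inv_mul_cancel₀ (sub_ne_zero.mpr fun h' => hne h'.symm),
        one_smul] at h2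
    have hWtop : W = ⊤ := eq_top_iff.mpr fun v _ => hall v
    rw [hWtop, finrank_top, hV9] at hW6
    omega
  have hrW : ∀ u : VK K, σ u - u ∈ W := by
    intro u; have := hc' u; rwa [hc1, one_smul] at this
  -- the kernel of σ - 1
  set φ := phiL q F hadd hsmul with hφdef
  set ψ := σ - LinearMap.id with hψdef
  have hψapp : ∀ v : VK K, ψ v = σ v - v := fun _ => rfl
  have hkerψ : LinearMap.ker ψ = LinearMap.range φ := by
    ext v
    obtain ⟨x, y, z⟩ := v
    constructor
    · intro hv
      rw [LinearMap.mem_ker] at hv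
      have hfix : sig q (x, y, z) = (x, y, z) := by
        have := hψapp (x, y, z)
        rw [hv] at this
        have h2 := (sub_eq_zero.mp this.symm)
        rw [← hσapp]; exact h2
      rw [Prod.ext_iff, Prod.ext_iff] at hfix
      obtain ⟨h1, h2, h3⟩ := hfix
      refine ⟨x, ?_⟩
      show (x, x ^ q, (x ^ q) ^ q) = (x, y, z)
      simp only [sig] at h1 h2 h3
      refine Prod.ext rfl (Prod.ext h2 ?_)
      dsimp only
      rw [h2, h3]
    · rintro ⟨t, ht⟩
      rw [LinearMap.mem_ker, ← ht, hψapp, sub_eq_zero, hσapp]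
      show sig q (t, t ^ q, (t ^ q) ^ q) = (t, t ^ q, (t ^ q) ^ q)
      simp only [sig]
      exact Prod.ext (hpow3 t) rfl
  have hφinj : Function.Injective φ := by
    intro a b hab
    have : ((a, a ^ q, (a ^ q) ^ q) : VK K) = (b, b ^ q, (b ^ q) ^ q) := hab
    exact congrArg Prod.fst this
  have hker3dim : finrank F (LinearMap.ker ψ) = 3 := by
    rw [hkerψ, LinearMap.finrank_range_of_inj hφinj, hKF]
  have hrange6 : finrank F (LinearMap.range ψ) = 6 := by
    have h := LinearMap.finrank_range_add_finrank_ker ψ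
    rw [hV9, hker3dim] at h
    omega
  have hWr : LinearMap.range ψ = W := by
    apply Submodule.eq_of_le_of_finrank_eq
    · rintro x ⟨u, rfl⟩
      rw [hψapp]; exact hrW u
    · rw [hrange6, hW6]
  have hker3 : ∀ v ∈ W, σ (σ v) + σ v + v = 0 := by
    intro v hv
    rw [← hWr] at hv
    obtain ⟨u, rfl⟩ := hv
    rw [hψapp, map_sub, map_sub, hσ3 u]
    abel
  -- Part 2
  have P2 : ∀ v ∈ W, v ≠ 0 → ¬ IsFixedPt F q v := by
    intro v hv hv0 hfix
    obtain ⟨a, ha⟩ := Submodule.mem_span_singleton.mp hfix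
    have hσv : σ v = a • v := by rw [hσapp]; exact ha.symm
    have h := hker3 v hv
    rw [hσv, map_smul, hσv, smul_smul] at h
    have h2 : (a * a + a + 1) • v = 0 := by
      rw [add_smul, add_smul, one_smul]; exact h
    rcases smul_eq_zero.mp h2 with h3 | h3
    · exact no_root_aux q hq F hF hq3 a h3
    · exact hv0 h3
  -- Part 3
  have P3 : ¬ ∃ T : Submodule F (VK K), T ≤ W ∧ finrank F T = 3 ∧
      sig q '' (T : Set (VK K)) = (T : Set (VK K)) := by
    rintro ⟨T, hTW, hT3, hTinv⟩
    have hTmem : ∀ x ∈ T, σ x ∈ T := by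
      intro x hx
      have h1 : sig q x ∈ sig q '' (T : Set (VK K)) := Set.mem_image_of_mem _ hx
      rw [hTinv] at h1; exact h1
    have hTne : T ≠ ⊥ := by
      intro h; rw [h, finrank_bot] at hT3; omega
    obtain ⟨v, hvT, hv0⟩ := Submodule.exists_mem_ne_zero_of_ne_bot hTne
    by_cases hvs : sig q v ∈ Submodule.span F {v}
    · exact P2 v (hTW hvT) hv0 hvs
    · have hσinj : Function.Injective σ := by
        intro a b hab
        have h1 := congrArg (fun x => σ (σ x)) hab
        simpa [hσ3 a, hσ3 b] using h1
      have hσv0 : σ v ≠ 0 := by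
        intro h
        exact hv0 (hσinj (h.trans (map_zero σ).symm))
      set U := Submodule.span F ({v, σ v} : Set (VK K)) with hUdef
      have hvU : v ∈ U := Submodule.subset_span (by left; rfl)
      have hσvU : σ v ∈ U := Submodule.subset_span (by right; rfl)
      have hinf : (Submodule.span F {v}) ⊓ (Submodule.span F {σ v}) = ⊥ := by
        rw [eq_bot_iff]
        rintro x ⟨hx1, hx2⟩
        obtain ⟨a, rfl⟩ := Submodule.mem_span_singleton.mp hx1
        obtain ⟨b, hb⟩ := Submodule.mem_span_singleton.mp hx2
        rcases eq_or_ne a 0 with rfl | ha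
        · rw [zero_smul]; exact Submodule.zero_mem ⊥
        · exfalso
          have hbne : b ≠ 0 := by
            rintro rfl
            rw [zero_smul] at hb
            exact ha (by simpa [smul_eq_zero, hv0] using hb.symm)
          apply hvs
          rw [← hσapp]
          have : σ v = b⁻¹ • (a • v) := by
            rw [← hb, smul_smul, inv_mul_cancel₀ hbne, one_smul]
          rw [this, smul_smul]
          exact Submodule.smul_mem _ _ (Submodule.mem_span_singleton_self v)
      have hU2 : finrank F U = 2 := by
        have hsp : U = (Submodule.span F {v}) ⊔ (Submodule.span F {σ v}) := by
          rw [hUdef, show ({v, σ v} : Set (VK K)) = insert v {σ v} from rfl,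
            Submodule.span_insert]
        have h := Submodule.finrank_sup_add_finrank_inf_eq
          (Submodule.span F {v}) (Submodule.span F {σ v})
        rw [hinf, finrank_bot, finrank_span_singleton hv0,
          finrank_span_singleton hσv0] at h
        rw [hsp]
        omega
      have hUT : U ≤ T := by
        rw [hUdef, Submodule.span_le]
        rintro x (rfl | rfl)
        · exact hvT
        · exact hTmem v hvT
      have hUne : U ≠ T := by
        intro h; rw [h, hT3] at hU2; omega
      obtain ⟨w, hwT, hwU⟩ := SetLike.exists_of_lt (lt_of_le_of_ne hUT hUne)
      have hw0 : w ≠ 0 := by rintro rfl; exact hwU (Submodule.zero_mem U)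
      have hinfw : U ⊓ Submodule.span F {w} = ⊥ := by
        rw [eq_bot_iff]
        rintro x ⟨hx1, hx2⟩
        obtain ⟨a, rfl⟩ := Submodule.mem_span_singleton.mp hx2
        rcases eq_or_ne a 0 with rfl | ha
        · rw [zero_smul]; exact Submodule.zero_mem ⊥
        · exfalso
          apply hwU
          have h2 := U.smul_mem a⁻¹ hx1
          rwa [smul_smul, inv_mul_cancel₀ ha, one_smul] at h2
      have hsup : U ⊔ Submodule.span F {w} = T := by
        apply Submodule.eq_of_le_of_finrank_eq
        · exact sup_le hUT ((Submodule.span_le).mpr (by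
            rintro x rfl
            exact hwT))
        · have h := Submodule.finrank_sup_add_finrank_inf_eq U (Submodule.span F {w})
          rw [hinfw, finrank_bot, hU2, finrank_span_singleton hw0] at h
          rw [hT3]
          omega
      have hσwT : σ w ∈ U ⊔ Submodule.span F {w} := by rw [hsup]; exact hTmem w hwT
      obtain ⟨u, huU, s, hs, heq⟩ := Submodule.mem_sup.mp hσwT
      obtain ⟨a, rfl⟩ := Submodule.mem_span_singleton.mp hs
      have hσw : σ w = u + a • w := heq.symm
      have hUσ : ∀ x ∈ U, σ x ∈ U := by
        intro x hx
        have hσσv : σ (σ v) ∈ U := by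
          have h := hker3 v (hTW hvT)
          have h2 : σ (σ v) = -(σ v + v) := by
            apply eq_neg_of_add_eq_zero_left
            rw [← add_assoc]; exact h
          rw [h2]
          exact U.neg_mem (U.add_mem hσvU hvU)
        refine Submodule.span_induction ?_ ?_ ?_ ?_ hx
        · rintro y (rfl | rfl)
          · exact hσvU
          · exact hσσv
        · rw [map_zero]; exact U.zero_mem
        · intro y z _ _ hy hz
          rw [map_add]; exact U.add_mem hy hz
        · intro b y _ hy
          rw [map_smul]; exact U.smul_mem b hy
      have hk := hker3 w (hTW hwT)
      have hσσw : σ (σ w) = (σ u + a • u) + (a * a) • w := by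
        rw [hσw, map_add, map_smul, hσw, smul_add, smul_smul]
        abel
      have hre : ((a * a) • w + a • w + w) + ((σ u + a • u) + u) = 0 := by
        rw [← hk, hσσw, hσw]
        abel
      have hfinal : (a * a + a + 1) • w = -((σ u + a • u) + u) := by
        rw [add_smul, add_smul, one_smul]
        exact eq_neg_of_add_eq_zero_left hre
      have hmem : (a * a + a + 1) • w ∈ U := by
        rw [hfinal]
        exact U.neg_mem (U.add_mem (U.add_mem (hUσ u huU) (U.smul_mem a huU)) huU)
      have hwU' : w ∈ U := by
        have h2 := U.smul_mem (a * a + a + 1)⁻¹ hmem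
        rwa [smul_smul, inv_mul_cancel₀ (no_root_aux q hq F hF hq3 a), one_smul] at h2
      exact hwU hwU'
  exact ⟨fun ⟨T, h1, h2, h3, _⟩ => P3 ⟨T, h1, h2, h3⟩, P2, P3⟩
end
end

section
/- For all x, y ∈ K, the determinant of the 3×3 matrix over K with rows (x, y, 1), (x^q, y^q, 1), (x^{q²}, y^{q²}, 1) equals Tr(x·y^q − x^q·y). Moreover, writing x = x₀ + x₁τ + x₂τ² and y = y₀ + y₁τ + y₂τ² with xᵢ, yᵢ ∈ F, one has Tr(x·y^q − x^q·y) = β·(x₁y₂ − x₂y₁), where β = Tr(τ^{2q+1} − τ^{q+2}), and β ≠ 0. Consequently the three vectors (x, y, 1), (x^q, y^q, 1), (x^{q²}, y^{q²}, 1) are K-linearly dependent if and only if x₁y₂ = x₂y₁. -/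
/-! The Frobenius `φ : x ↦ x ^ q` of `K/F` has order three and fixes `F`. Expanding the
determinant along its last column gives the cyclic sum `Tr(x·φy − φx·y)`. Writing
`x = x₀ + x₁τ + x₂τ²` and `y = y₀ + y₁τ + y₂τ²`, the matrix with rows `(x, y, 1)`, `(φx, φy, 1)`,
`(φ²x, φ²y, 1)` is the one for `(τ, τ²)` times a matrix over `F` of determinant `x₁y₂ − x₂y₁`,
and the determinant for `(τ, τ²)` is `β`, a Vandermonde determinant in `τ, τ^q, τ^{q²}`; these
are distinct because `τ ∉ F`. -/

open Module

noncomputable section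

/-- The trace map `Tr(z) = z + z^q + z^(q²)` of `K = GF(q³)`. -/
def Trc (q : ℕ) {K : Type*} [Field K] (z : K) : K :=
  z + z ^ q + z ^ q ^ 2

open Matrix

section RingHomRows

variable {R : Type*} [CommRing R] (φ : R →+* R)

lemma det_ringHomRows_eq_cross_add (hφ : ∀ z, φ (φ (φ z)) = z) (x y : R) :
    det !![x, y, 1; φ x, φ y, 1; φ (φ x), φ (φ y), 1] =
      (x * φ y - φ x * y) + φ (x * φ y - φ x * y) + φ (φ (x * φ y - φ x * y)) := by
  simp only [det_fin_three, of_apply, cons_val', cons_val_zero, cons_val_one, cons_val,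
    cons_val_fin_one, mul_one, one_mul, map_sub, map_mul, hφ]
  ring

lemma det_ringHomRows_of_coords (t : R) {x0 x1 x2 y0 y1 y2 : R}
    (hx0 : φ x0 = x0) (hx1 : φ x1 = x1) (hx2 : φ x2 = x2)
    (hy0 : φ y0 = y0) (hy1 : φ y1 = y1) (hy2 : φ y2 = y2) :
    det !![x0 + x1 * t + x2 * t ^ 2, y0 + y1 * t + y2 * t ^ 2, 1;
        φ (x0 + x1 * t + x2 * t ^ 2), φ (y0 + y1 * t + y2 * t ^ 2), 1;
        φ (φ (x0 + x1 * t + x2 * t ^ 2)), φ (φ (y0 + y1 * t + y2 * t ^ 2)), 1] =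
      det !![t, t ^ 2, 1; φ t, φ (t ^ 2), 1; φ (φ t), φ (φ (t ^ 2)), 1] *
        (x1 * y2 - x2 * y1) := by
  simp only [det_fin_three, of_apply, cons_val', cons_val_zero, cons_val_one, cons_val,
    cons_val_fin_one, mul_one, one_mul, map_add, map_mul, map_pow,
    hx0, hx1, hx2, hy0, hy1, hy2]
  ring

lemma det_ringHomRows_self_sq (t : R) :
    det !![t, t ^ 2, 1; φ t, φ (t ^ 2), 1; φ (φ t), φ (φ (t ^ 2)), 1] =
      (φ t - t) * (φ (φ t) - t) * (φ (φ t) - φ t) := by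
  simp only [det_fin_three, of_apply, cons_val', cons_val_zero, cons_val_one, cons_val,
    cons_val_fin_one, mul_one, one_mul, map_pow]
  ring

lemma det_ringHomRows_self_sq_ne_zero [NoZeroDivisors R] (hφ : ∀ z, φ (φ (φ z)) = z) {t : R}
    (ht : φ t ≠ t) :
    det !![t, t ^ 2, 1; φ t, φ (t ^ 2), 1; φ (φ t), φ (φ (t ^ 2)), 1] ≠ 0 := by
  have hinj : Function.Injective φ := Function.LeftInverse.injective (g := φ.comp φ) hφ
  have ht2 : φ (φ t) ≠ t := fun h => ht (by rw [← h, hφ, h])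
  rw [det_ringHomRows_self_sq]
  exact mul_ne_zero (mul_ne_zero (sub_ne_zero.2 ht) (sub_ne_zero.2 ht2))
    (sub_ne_zero.2 (hinj.ne ht))

end RingHomRows

section PowerMap

variable {K : Type*} [Field K] {q : ℕ} {φ : K →+* K}

lemma powRows_eq_ringHomRows (hφ : ∀ z, φ z = z ^ q) (x y : K) :
    !![x, y, 1; x ^ q, y ^ q, 1; x ^ q ^ 2, y ^ q ^ 2, 1] =
      !![x, y, 1; φ x, φ y, 1; φ (φ x), φ (φ y), 1] := by
  simp only [hφ, ← pow_mul, sq]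

lemma trc_eq_add_ringHom (hφ : ∀ z, φ z = z ^ q) (z : K) : Trc q z = z + φ z + φ (φ z) := by
  simp only [Trc, hφ, ← pow_mul, sq]

lemma det_powRows_eq_trc (hφ : ∀ z, φ z = z ^ q) (hφ3 : ∀ z, φ (φ (φ z)) = z) (x y : K) :
    det !![x, y, 1; x ^ q, y ^ q, 1; x ^ q ^ 2, y ^ q ^ 2, 1] =
      Trc q (x * y ^ q - x ^ q * y) := by
  rw [powRows_eq_ringHomRows hφ, trc_eq_add_ringHom hφ, det_ringHomRows_eq_cross_add φ hφ3, hφ x, hφ y]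

lemma trc_eq_det_ringHomRows_self_sq (hφ : ∀ z, φ z = z ^ q) (hφ3 : ∀ z, φ (φ (φ z)) = z) (t : K) :
    Trc q (t ^ (2 * q + 1) - t ^ (q + 2)) =
      det !![t, t ^ 2, 1; φ t, φ (t ^ 2), 1; φ (φ t), φ (φ (t ^ 2)), 1] := by
  rw [show t ^ (2 * q + 1) = t * (t ^ 2) ^ q by ring, show t ^ (q + 2) = t ^ q * t ^ 2 by ring,
    ← det_powRows_eq_trc hφ hφ3, powRows_eq_ringHomRows hφ]

end PowerMap

def linearEquivFinThree (R : Type*) [CommSemiring R] : (R × R × R) ≃ₗ[R] (Fin 3 → R) :=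
  (LinearEquiv.prodCongr (LinearEquiv.refl R R) (LinearEquiv.finTwoArrow R R).symm).trans
    (Fin.consLinearEquiv R fun _ => R)

lemma linearIndependent_triple_iff_det_ne_zero {K : Type*} [Field K] (u v w : K × K × K) :
    LinearIndependent K ![u, v, w] ↔
      det !![u.1, u.2.1, u.2.2; v.1, v.2.1, v.2.2; w.1, w.2.1, w.2.2] ≠ 0 := by
  have hrows : ⇑(linearEquivFinThree K) ∘ ![u, v, w] =
      (!![u.1, u.2.1, u.2.2; v.1, v.2.1, v.2.2; w.1, w.2.1, w.2.2]).row := by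
    ext i j
    fin_cases i <;> fin_cases j <;> rfl
  rw [← (linearEquivFinThree K).toLinearMap.linearIndependent_iff (linearEquivFinThree K).ker,
    LinearEquiv.coe_coe, hrows, linearIndependent_rows_iff_isUnit, isUnit_iff_isUnit_det,
    isUnit_iff_ne_zero]

lemma mem_range_algebraMap_of_pow_card_eq_self {F K : Type*} [Field F] [Fintype F] [Field K]
    [Finite K] [Algebra F K] {z : K} (hz : z ^ Fintype.card F = z) :
    z ∈ Set.range (algebraMap F K) := by
  have := Module.finite_of_finite F (M := K)
  rw [IsGalois.mem_range_algebraMap_iff_fixed]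
  intro f
  obtain ⟨n, rfl⟩ := (FiniteField.bijective_frobeniusAlgEquivOfAlgebraic_pow F K).2 f
  rw [AlgEquiv.coe_pow, FiniteField.coe_frobeniusAlgEquivOfAlgebraic]
  exact Function.iterate_fixed hz n

lemma notMem_range_algebraMap_of_existsUnique_coords {F K : Type*} [Field F] [Field K]
    [Algebra F K] {τ : K}
    (hτ : ∃! c : Fin 3 → F,
      τ = algebraMap F K (c 0) + algebraMap F K (c 1) * τ + algebraMap F K (c 2) * τ ^ 2) :
    τ ∉ Set.range (algebraMap F K) := by
  rintro ⟨a, rfl⟩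
  have h := hτ.unique (y₁ := ![a, 0, 0]) (y₂ := ![0, 1, 0]) (by simp) (by simp)
  simpa using congr_fun h 1

theorem stmt19_general (q : ℕ)
    (F : Type*) [Field F] [Fintype F] (K : Type*) [Field K] [Fintype K]
    [Algebra F K] (hF : Fintype.card F = q) (hK : Fintype.card K = q ^ 3)
    (τ : K)
    (hτ : ∀ z : K, ∃! c : Fin 3 → F,
      z = algebraMap F K (c 0) + algebraMap F K (c 1) * τ +
        algebraMap F K (c 2) * τ ^ 2) :
    ∀ x y : K, ∀ x0 x1 x2 y0 y1 y2 : F,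
      x = algebraMap F K x0 + algebraMap F K x1 * τ + algebraMap F K x2 * τ ^ 2 →
      y = algebraMap F K y0 + algebraMap F K y1 * τ + algebraMap F K y2 * τ ^ 2 →
      Matrix.det !![x, y, 1; x ^ q, y ^ q, 1; x ^ q ^ 2, y ^ q ^ 2, 1] =
          Trc q (x * y ^ q - x ^ q * y) ∧
        Trc q (x * y ^ q - x ^ q * y) =
          Trc q (τ ^ (2 * q + 1) - τ ^ (q + 2)) * algebraMap F K (x1 * y2 - x2 * y1) ∧
        Trc q (τ ^ (2 * q + 1) - τ ^ (q + 2)) ≠ 0 ∧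
        (¬ LinearIndependent K
            ![((x, y, 1) : VK K), (x ^ q, y ^ q, 1), (x ^ q ^ 2, y ^ q ^ 2, 1)] ↔
          x1 * y2 = x2 * y1) := by
  intro x y x0 x1 x2 y0 y1 y2 hx hy
  set φ : K →+* K := (FiniteField.frobeniusAlgHom F K : K →+* K)
  have hφ : ∀ z, φ z = z ^ q := fun z => by rw [← hF]; rfl
  have hφ3 : ∀ z, φ (φ (φ z)) = z := fun z => by
    rw [hφ, hφ, hφ, ← pow_mul, ← pow_mul, show q * (q * q) = q ^ 3 by ring, ← hK,
      FiniteField.pow_card]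
  have hfix : ∀ c : F, φ (algebraMap F K c) = algebraMap F K c :=
    (FiniteField.frobeniusAlgHom F K).commutes
  have hτφ : φ τ ≠ τ := fun h => notMem_range_algebraMap_of_existsUnique_coords (hτ τ)
    (mem_range_algebraMap_of_pow_card_eq_self (by rwa [hF, ← hφ]))
  have hdet := det_powRows_eq_trc hφ hφ3
  have hβ := trc_eq_det_ringHomRows_self_sq hφ hφ3 τ
  have hβne : Trc q (τ ^ (2 * q + 1) - τ ^ (q + 2)) ≠ 0 :=
    hβ ▸ det_ringHomRows_self_sq_ne_zero φ hφ3 hτφ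
  have hcoords : Trc q (x * y ^ q - x ^ q * y) =
      Trc q (τ ^ (2 * q + 1) - τ ^ (q + 2)) * algebraMap F K (x1 * y2 - x2 * y1) := by
    rw [← hdet, powRows_eq_ringHomRows hφ, hβ, map_sub, map_mul, map_mul, hx, hy]
    exact det_ringHomRows_of_coords φ τ (hfix x0) (hfix x1) (hfix x2) (hfix y0) (hfix y1) (hfix y2)
  refine ⟨hdet x y, hcoords, hβne, ?_⟩
  rw [linearIndependent_triple_iff_det_ne_zero, not_not, hdet, hcoords,
    mul_eq_zero, or_iff_right hβne, map_eq_zero, sub_eq_zero]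

/-- the determinant identity `det = Tr(x·y^q − x^q·y) = β(x₁y₂ − x₂y₁)`
with `β = Tr(τ^{2q+1} − τ^{q+2}) ≠ 0`, and the linear-dependence criterion. -/
theorem stmt19 (q : ℕ) (hq : 2 < q)
    (F : Type*) [Field F] [Fintype F] (K : Type*) [Field K] [Fintype K]
    [Algebra F K] (hF : Fintype.card F = q) (hK : Fintype.card K = q ^ 3)
    (τ : K)
    (hτ : ∀ z : K, ∃! c : Fin 3 → F,
      z = algebraMap F K (c 0) + algebraMap F K (c 1) * τ +
        algebraMap F K (c 2) * τ ^ 2) :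
    ∀ x y : K, ∀ x0 x1 x2 y0 y1 y2 : F,
      x = algebraMap F K x0 + algebraMap F K x1 * τ + algebraMap F K x2 * τ ^ 2 →
      y = algebraMap F K y0 + algebraMap F K y1 * τ + algebraMap F K y2 * τ ^ 2 →
      Matrix.det !![x, y, 1; x ^ q, y ^ q, 1; x ^ q ^ 2, y ^ q ^ 2, 1] =
          Trc q (x * y ^ q - x ^ q * y) ∧
        Trc q (x * y ^ q - x ^ q * y) =
          Trc q (τ ^ (2 * q + 1) - τ ^ (q + 2)) * algebraMap F K (x1 * y2 - x2 * y1) ∧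
        Trc q (τ ^ (2 * q + 1) - τ ^ (q + 2)) ≠ 0 ∧
        (¬ LinearIndependent K
            ![((x, y, 1) : VK K), (x ^ q, y ^ q, 1), (x ^ q ^ 2, y ^ q ^ 2, 1)] ↔
          x1 * y2 = x2 * y1) :=
  stmt19_general q F K hF hK τ hτ
end
end
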